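/- arXiv:1705.09043 — 3 statements merged into one kernel-verified Lean document; each statement's English description precedes it below -/
import Mathlib

section
/- Let u : C → R be nonnegative and concave and v : C → R be positive and convex on a convex set C ⊆ R^n. Then the function D(λ) = sup_{x ∈ C} (u(x) − λ v(x)) is convex and strictly monotonically decreasing in λ on the set where the supremum is finite and attained, provided v is bounded below by a positive constant on C. -/
/-!
`D` is the upper envelope of the affine functions `λ ↦ u x - λ v x`, `x ∈ C`, and the envelope is
attained at every `λ`. A pointwise maximum of convex functions is convex, and an attained
maximum of strictly decreasing functions is strictly decreasing; each `λ ↦ u x - λ v x` is affine,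
and strictly decreasing because `v x > 0`.
-/

open Set

section AttainedEnvelope

variable {ι α β : Type*} {s : Set ι} {f : ι → α → β} {D : α → β}

theorem convexOn_of_eq_attained_max {𝕜 : Type*} [Semiring 𝕜] [PartialOrder 𝕜]
    [AddCommMonoid α] [Module 𝕜 α] [AddCommMonoid β] [PartialOrder β] [IsOrderedAddMonoid β]
    [Module 𝕜 β] [PosSMulMono 𝕜 β] {t : Set α} (ht : Convex 𝕜 t)
    (hf : ∀ i ∈ s, ConvexOn 𝕜 t (f i))
    (hD : ∀ x ∈ t, ∃ i ∈ s, D x = f i x ∧ ∀ j ∈ s, f j x ≤ f i x) : ConvexOn 𝕜 t D := by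
  have hle : ∀ x ∈ t, ∀ j ∈ s, f j x ≤ D x := fun x hx j hj => by
    obtain ⟨i, -, hDi, hmax⟩ := hD x hx
    exact hDi ▸ hmax j hj
  refine ⟨ht, fun x hx y hy a b ha hb hab => ?_⟩
  obtain ⟨i, hi, hDi, -⟩ := hD (a • x + b • y) (ht hx hy ha hb hab)
  calc D (a • x + b • y) = f i (a • x + b • y) := hDi
    _ ≤ a • f i x + b • f i y := (hf i hi).2 hx hy ha hb hab
    _ ≤ a • D x + b • D y := by gcongr <;> exact hle _ ‹_› i hi

theorem strictAnti_of_eq_attained_max [Preorder α] [Preorder β]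
    (hf : ∀ i ∈ s, StrictAnti (f i))
    (hD : ∀ x, ∃ i ∈ s, D x = f i x ∧ ∀ j ∈ s, f j x ≤ f i x) : StrictAnti D := by
  intro x y hxy
  obtain ⟨i, -, hDx, hmax⟩ := hD x
  obtain ⟨j, hj, hDy, -⟩ := hD y
  calc D y = f j y := hDy
    _ < f j x := hf j hj hxy
    _ ≤ f i x := hmax j hj
    _ = D x := hDx.symm

end AttainedEnvelope

theorem convexOn_const_sub_mul (a b : ℝ) : ConvexOn ℝ univ fun l : ℝ => a - l * b :=
  ⟨convex_univ, fun l₁ _ l₂ _ s t _ _ hst =>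
    le_of_eq (by simp only [smul_eq_mul]; linear_combination (-a) * hst)⟩

theorem strictAnti_const_sub_mul (a : ℝ) {b : ℝ} (hb : 0 < b) : StrictAnti fun l : ℝ => a - l * b :=
  fun _ _ h => sub_lt_sub_left (mul_lt_mul_of_pos_right h hb) a

theorem dinkelbach_aux_convex_strictAnti_general
    {n : ℕ} (C : Set (Fin n → ℝ))
    (u v : (Fin n → ℝ) → ℝ)
    (hv0 : ∀ x ∈ C, 0 < v x)
    (D : ℝ → ℝ)
    (hD : ∀ l : ℝ, ∃ x ∈ C,
        D l = u x - l * v x ∧ ∀ y ∈ C, u y - l * v y ≤ u x - l * v x) :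
    ConvexOn ℝ Set.univ D ∧ StrictAnti D :=
  ⟨convexOn_of_eq_attained_max (f := fun x l => u x - l * v x) convex_univ
      (fun x _ => convexOn_const_sub_mul (u x) (v x)) (fun l _ => hD l),
    strictAnti_of_eq_attained_max (f := fun x l => u x - l * v x)
      (fun x hx => strictAnti_const_sub_mul (u x) (hv0 x hx)) hD⟩

/-- Dinkelbach auxiliary function: for `u` nonnegative concave, `v` positive
convex and bounded below by a positive constant on a nonempty convex set `C`,
if for every `λ` the supremum `D(λ) = max_{x ∈ C} (u x − λ v x)` is attained,
then `D` is convex and strictly monotonically decreasing. -/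
theorem dinkelbach_aux_convex_strictAnti
    {n : ℕ} (C : Set (Fin n → ℝ)) (hC : Convex ℝ C) (hne : C.Nonempty)
    (u v : (Fin n → ℝ) → ℝ)
    (hu0 : ∀ x ∈ C, 0 ≤ u x) (huconc : ConcaveOn ℝ C u)
    (hv0 : ∀ x ∈ C, 0 < v x) (hvconv : ConvexOn ℝ C v)
    (m : ℝ) (hm : 0 < m) (hvm : ∀ x ∈ C, m ≤ v x)
    (D : ℝ → ℝ)
    (hD : ∀ l : ℝ, ∃ x ∈ C,
        D l = u x - l * v x ∧ ∀ y ∈ C, u y - l * v y ≤ u x - l * v x) :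
    ConvexOn ℝ Set.univ D ∧ StrictAnti D :=
  dinkelbach_aux_convex_strictAnti_general C u v hv0 D hD
end

section
/- Let u : C → R be nonnegative and v : C → R be positive on a set C. A point x* ∈ C maximizes u(x)/v(x) over C with maximal value λ* = u(x*)/v(x*) if and only if max_{x ∈ C} (u(x) − λ* v(x)) = 0 and the maximum is attained at x*. -/
theorem div_le_iff_sub_mul_nonpos {α : Type*} [Field α] [LinearOrder α] [IsStrictOrderedRing α]
    {a b c : α} (hb : 0 < b) : a / b ≤ c ↔ a - c * b ≤ 0 := by
  rw [div_le_iff₀ hb, sub_nonpos]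

theorem dinkelbach_equivalence_general
    {X : Type*} (C : Set X) (u v : X → ℝ)
    (hv : ∀ x ∈ C, 0 < v x)
    (xs : X) (hxs : xs ∈ C) :
    (∀ x ∈ C, u x / v x ≤ u xs / v xs) ↔
      (u xs - (u xs / v xs) * v xs = 0 ∧
        ∀ x ∈ C, u x - (u xs / v xs) * v x ≤ 0) := by
  have hattained : u xs - (u xs / v xs) * v xs = 0 := by
    rw [div_mul_cancel₀ _ (hv xs hxs).ne', sub_self]
  rw [and_iff_right hattained]
  exact forall₂_congr fun x hx => div_le_iff_sub_mul_nonpos (hv x hx)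

/-- Dinkelbach's fundamental equivalence for fractional programming:
for `u ≥ 0`, `v > 0` on a nonempty set `C` and `x* ∈ C` with
`λ* = u(x*)/v(x*)`, the point `x*` maximizes `u/v` over `C` iff
`max_{x ∈ C} (u x − λ* v x) = 0` with the maximum attained at `x*`. -/
theorem dinkelbach_equivalence
    {X : Type*} (C : Set X) (hne : C.Nonempty) (u v : X → ℝ)
    (hu : ∀ x ∈ C, 0 ≤ u x) (hv : ∀ x ∈ C, 0 < v x)
    (xs : X) (hxs : xs ∈ C) :
    (∀ x ∈ C, u x / v x ≤ u xs / v xs) ↔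
      (u xs - (u xs / v xs) * v xs = 0 ∧
        ∀ x ∈ C, u x - (u xs / v xs) * v x ≤ 0) :=
  dinkelbach_equivalence_general C u v hv xs hxs
end

section
/- Let f(λ) = max_{x ∈ X} min_{1 ≤ k ≤ K} (u_k(x) − λ v_k(x)) where X is a nonempty compact set, u_k continuous and nonnegative, v_k continuous and positive on X. Then f is non-increasing in λ, continuous, and f(λ*) = 0 where λ* = max_{x ∈ X} min_k u_k(x)/v_k(x); moreover f(λ) > 0 for λ < λ* and f(λ) < 0 for λ > λ*. -/
/-!
For fixed `x` the sign of `min_k (u_k x - λ v_k x)` is the sign of `min_k u_k x / v_k x - λ`,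
because every `v_k x` is positive. Since the maxima over the compact set `X` are attained,
`f λ > 0` exactly when some `x` has ratio above `λ`, i.e. when `λ < λ*`, and `f λ < 0` exactly
when every ratio lies below `λ`, i.e. when `λ* < λ`; hence `f λ* = 0`. Monotonicity is pointwise,
and continuity is that of a maximum over a compact set of a jointly continuous function.
-/

open Set

theorem ContinuousOn.ciInf_of_finite {E ι L : Type*} [TopologicalSpace E] [Finite ι] [Nonempty ι]
    [ConditionallyCompleteLattice L] [TopologicalSpace L] [ContinuousInf L]
    {F : ι → E → L} {s : Set E} (hF : ∀ i, ContinuousOn (F i) s) :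
    ContinuousOn (fun x => ⨅ i, F i x) s := by
  have := Fintype.ofFinite ι
  simpa only [Finset.inf'_univ_eq_ciInf] using
    ContinuousOn.finset_inf'_apply Finset.univ_nonempty fun i _ => hF i

theorem lt_ciInf_iff_of_finite {ι α : Type*} [Finite ι] [Nonempty ι]
    [ConditionallyCompleteLinearOrder α] {f : ι → α} {a : α} :
    a < ⨅ i, f i ↔ ∀ i, a < f i := by
  refine ⟨fun h i => h.trans_le (ciInf_le (Set.finite_range f).bddBelow i), fun h => ?_⟩
  obtain ⟨i, hi⟩ := exists_eq_ciInf_of_finite (f := f)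
  exact hi ▸ h i

theorem IsCompact.lt_sSup_iff_of_continuous {E α : Type*} [TopologicalSpace E]
    [ConditionallyCompleteLinearOrder α] [TopologicalSpace α] [ClosedIciTopology α]
    {f : E → α} {K : Set E} (hK : IsCompact K) (h0K : K.Nonempty) (hf : ContinuousOn f K)
    (y : α) : y < sSup (f '' K) ↔ ∃ x ∈ K, y < f x :=
  (lt_csSup_iff (hK.bddAbove_image hf) (h0K.image f)).trans exists_mem_image

theorem IsCompact.continuous_sSup_of_continuousOn {γ E α : Type*} [TopologicalSpace γ]
    [TopologicalSpace E] [ConditionallyCompleteLinearOrder α] [TopologicalSpace α]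
    [OrderTopology α] {f : γ × E → α} {K : Set E} (hK : IsCompact K)
    (hf : ContinuousOn f (univ ×ˢ K)) : Continuous fun c => sSup ((fun x => f (c, x)) '' K) := by
  have := isCompact_iff_compactSpace.mp hK
  have hf' : Continuous fun p : γ × K => f (p.1, p.2) :=
    hf.comp_continuous (continuous_fst.prodMk (continuous_subtype_val.comp continuous_snd))
      fun p => ⟨trivial, p.2.2⟩
  have h := isCompact_univ.continuous_sSup (f := fun c (x : K) => f (c, x)) hf'
  simp only [image_univ] at h
  simpa only [image_eq_range] using h

section Pointwise

variable {ι : Type*} [Finite ι] [Nonempty ι] {a b : ι → ℝ}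

theorem ciInf_sub_mul_pos_iff (hb : ∀ i, 0 < b i) (l : ℝ) :
    0 < ⨅ i, (a i - l * b i) ↔ l < ⨅ i, a i / b i := by
  simp only [lt_ciInf_iff_of_finite, sub_pos, lt_div_iff₀ (hb _)]

theorem ciInf_sub_mul_neg_iff (hb : ∀ i, 0 < b i) (l : ℝ) :
    ⨅ i, (a i - l * b i) < 0 ↔ ⨅ i, a i / b i < l := by
  simp only [ciInf_lt_iff (Set.finite_range _).bddBelow, sub_neg, div_lt_iff₀ (hb _)]

end Pointwise

noncomputable def dinkelbachFun {E ι : Type*} (X : Set E) (u v : ι → E → ℝ) (l : ℝ) : ℝ :=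
  sSup ((fun x => ⨅ k, (u k x - l * v k x)) '' X)

noncomputable def maxMinRatio {E ι : Type*} (X : Set E) (u v : ι → E → ℝ) : ℝ :=
  sSup ((fun x => ⨅ k, u k x / v k x) '' X)

section Dinkelbach

variable {E ι : Type*} [TopologicalSpace E] [Finite ι] [Nonempty ι] {X : Set E}
  {u v : ι → E → ℝ}

theorem continuousOn_dinkelbach (hu : ∀ k, ContinuousOn (u k) X)
    (hv : ∀ k, ContinuousOn (v k) X) :
    ContinuousOn (fun p : ℝ × E => ⨅ k, (u k p.2 - p.1 * v k p.2)) (univ ×ˢ X) := by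
  refine ContinuousOn.ciInf_of_finite fun k => ?_
  have hsnd : MapsTo Prod.snd (univ ×ˢ X : Set (ℝ × E)) X := fun p hp => hp.2
  exact ((hu k).comp continuousOn_snd hsnd).sub
    (continuousOn_fst.mul ((hv k).comp continuousOn_snd hsnd))

theorem continuousOn_dinkelbach_apply (hu : ∀ k, ContinuousOn (u k) X)
    (hv : ∀ k, ContinuousOn (v k) X) (l : ℝ) :
    ContinuousOn (fun x => ⨅ k, (u k x - l * v k x)) X :=
  (continuousOn_dinkelbach hu hv).comp (continuousOn_const.prodMk continuousOn_id)
    fun _ hx => ⟨trivial, hx⟩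

theorem continuousOn_ciInf_div (hu : ∀ k, ContinuousOn (u k) X)
    (hv : ∀ k, ContinuousOn (v k) X) (hv0 : ∀ k, ∀ x ∈ X, 0 < v k x) :
    ContinuousOn (fun x => ⨅ k, u k x / v k x) X :=
  ContinuousOn.ciInf_of_finite fun k => (hu k).div (hv k) fun x hx => (hv0 k x hx).ne'

theorem antitone_dinkelbachFun (hXc : IsCompact X) (hXne : X.Nonempty)
    (hu : ∀ k, ContinuousOn (u k) X) (hv : ∀ k, ContinuousOn (v k) X)
    (hv0 : ∀ k, ∀ x ∈ X, 0 < v k x) : Antitone (dinkelbachFun X u v) := by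
  intro l l' hl
  refine csSup_le (hXne.image _) (forall_mem_image.2 fun x hx => ?_)
  refine le_trans ?_ (le_csSup (hXc.bddAbove_image (continuousOn_dinkelbach_apply hu hv l))
    (mem_image_of_mem _ hx))
  exact ciInf_mono (Set.finite_range _).bddBelow fun k =>
    sub_le_sub_left (mul_le_mul_of_nonneg_right hl (hv0 k x hx).le) _

theorem continuous_dinkelbachFun (hXc : IsCompact X) (hu : ∀ k, ContinuousOn (u k) X)
    (hv : ∀ k, ContinuousOn (v k) X) : Continuous (dinkelbachFun X u v) :=
  hXc.continuous_sSup_of_continuousOn (continuousOn_dinkelbach hu hv)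

theorem dinkelbachFun_pos_iff (hXc : IsCompact X) (hXne : X.Nonempty)
    (hu : ∀ k, ContinuousOn (u k) X) (hv : ∀ k, ContinuousOn (v k) X)
    (hv0 : ∀ k, ∀ x ∈ X, 0 < v k x) (l : ℝ) :
    0 < dinkelbachFun X u v l ↔ l < maxMinRatio X u v := by
  rw [dinkelbachFun, maxMinRatio,
    hXc.lt_sSup_iff_of_continuous hXne (continuousOn_dinkelbach_apply hu hv l),
    hXc.lt_sSup_iff_of_continuous hXne (continuousOn_ciInf_div hu hv hv0)]
  exact exists_congr fun x => and_congr_right fun hx => ciInf_sub_mul_pos_iff (hv0 · x hx) l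

theorem dinkelbachFun_neg_iff (hXc : IsCompact X) (hXne : X.Nonempty)
    (hu : ∀ k, ContinuousOn (u k) X) (hv : ∀ k, ContinuousOn (v k) X)
    (hv0 : ∀ k, ∀ x ∈ X, 0 < v k x) (l : ℝ) :
    dinkelbachFun X u v l < 0 ↔ maxMinRatio X u v < l := by
  rw [dinkelbachFun, maxMinRatio,
    hXc.sSup_lt_iff_of_continuous hXne (continuousOn_dinkelbach_apply hu hv l),
    hXc.sSup_lt_iff_of_continuous hXne (continuousOn_ciInf_div hu hv hv0)]
  exact forall₂_congr fun x hx => ciInf_sub_mul_neg_iff (hv0 · x hx) l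

theorem dinkelbachFun_maxMinRatio (hXc : IsCompact X) (hXne : X.Nonempty)
    (hu : ∀ k, ContinuousOn (u k) X) (hv : ∀ k, ContinuousOn (v k) X)
    (hv0 : ∀ k, ∀ x ∈ X, 0 < v k x) : dinkelbachFun X u v (maxMinRatio X u v) = 0 :=
  le_antisymm
    (not_lt.1 fun h => ((dinkelbachFun_pos_iff hXc hXne hu hv hv0 _).1 h).false)
    (not_lt.1 fun h => ((dinkelbachFun_neg_iff hXc hXne hu hv hv0 _).1 h).false)

end Dinkelbach

theorem generalized_dinkelbach_aux_general
    {E : Type*} [TopologicalSpace E] (X : Set E) (hXne : X.Nonempty)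
    (hXc : IsCompact X) (K : ℕ) (hK : 0 < K)
    (u v : Fin K → E → ℝ)
    (hu : ∀ k, ContinuousOn (u k) X) (hv : ∀ k, ContinuousOn (v k) X)
    (hv0 : ∀ k, ∀ x ∈ X, 0 < v k x)
    (f : ℝ → ℝ)
    (hf : ∀ l : ℝ, f l = sSup ((fun x => ⨅ k, (u k x - l * v k x)) '' X))
    (lstar : ℝ)
    (hlstar : lstar = sSup ((fun x => ⨅ k, u k x / v k x) '' X)) :
    Antitone f ∧ Continuous f ∧ f lstar = 0 ∧
      (∀ l < lstar, 0 < f l) ∧ ∀ l > lstar, f l < 0 := by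
  have : Nonempty (Fin K) := ⟨⟨0, hK⟩⟩
  obtain rfl : f = dinkelbachFun X u v := funext hf
  obtain rfl : lstar = maxMinRatio X u v := hlstar
  exact ⟨antitone_dinkelbachFun hXc hXne hu hv hv0, continuous_dinkelbachFun hXc hu hv,
    dinkelbachFun_maxMinRatio hXc hXne hu hv hv0,
    fun l hl => (dinkelbachFun_pos_iff hXc hXne hu hv hv0 l).2 hl,
    fun l hl => (dinkelbachFun_neg_iff hXc hXne hu hv hv0 l).2 hl⟩

/-- Generalized Dinkelbach auxiliary function for max-min fractional
programming: on a nonempty compact set `X`, with `u_k` continuous nonnegative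
and `v_k` continuous positive, the function
`f(λ) = max_{x ∈ X} min_k (u_k x − λ v_k x)` is non-increasing and continuous,
satisfies `f(λ*) = 0` at the optimal max-min ratio
`λ* = max_{x ∈ X} min_k u_k x / v_k x`, and `f(λ) > 0` for `λ < λ*`,
`f(λ) < 0` for `λ > λ*`. -/
theorem generalized_dinkelbach_aux
    {E : Type*} [TopologicalSpace E] (X : Set E) (hXne : X.Nonempty)
    (hXc : IsCompact X) (K : ℕ) (hK : 0 < K)
    (u v : Fin K → E → ℝ)
    (hu : ∀ k, ContinuousOn (u k) X) (hv : ∀ k, ContinuousOn (v k) X)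
    (hu0 : ∀ k, ∀ x ∈ X, 0 ≤ u k x) (hv0 : ∀ k, ∀ x ∈ X, 0 < v k x)
    (f : ℝ → ℝ)
    (hf : ∀ l : ℝ, f l = sSup ((fun x => ⨅ k, (u k x - l * v k x)) '' X))
    (lstar : ℝ)
    (hlstar : lstar = sSup ((fun x => ⨅ k, u k x / v k x) '' X)) :
    Antitone f ∧ Continuous f ∧ f lstar = 0 ∧
      (∀ l < lstar, 0 < f l) ∧ ∀ l > lstar, f l < 0 :=
  generalized_dinkelbach_aux_general X hXne hXc K hK u v hu hv hv0 f hf lstar hlstar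
end
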